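/- Suppose in addition that X has nondecreasing paths (X is an ascending subordinator) and that there is a function φ : [0, ∞) → [0, ∞) with E[e^{−λ X_t}] = e^{−t φ(λ)} for all t, λ ≥ 0. Then for every α > 0, β ≥ 0 and x ≥ 0, E[e^{−α τ_x^+ − β X_{τ_x^+}} 1_{{τ_x^+ < ∞}}] = (α + φ(β)) ∫_0^∞ e^{−α t} E[e^{−β X_t} 1_{{X_t > x}}] dt; that is, the left-hand side equals (α + φ(β)) ∫_{(x,∞)} e^{−β z} dU^{(α)}(z), where U^{(α)} is the α-resolvent measure of X defined by U^{(α)}(A) = ∫_0^∞ e^{−α t} ℙ(X_t ∈ A) dt. -/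

import Mathlib

/-!
Fix a deterministic time `s ≥ 0` and `A ∈ ℱ s`. Independence and stationarity of increments give
`E[e^{-β X_t}; A] = e^{-(t - s) φ(β)} E[e^{-β X_s}; A]` for `t ≥ s`, and integrating against
`e^{-α t}` over `(s, ∞)` yields
`(α + φ(β)) E[∫_s^∞ e^{-α t - β X_t} dt; A] = E[e^{-α s - β X_s}; A]`.
The dyadic approximations `τ_n = ⌈2^n τ⌉ / 2^n` of `τ = τ_x^+` are stopping times with countably
many values, so summing over these values gives the same identity with `s = τ_n` on `{τ < ∞}`.
As `τ_n ↓ τ`, right-continuity of the paths and dominated convergence carry it over to `τ`.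
Finally, for nondecreasing paths `X_t > x` iff `t > τ` (up to the single time `t = τ`), and Fubini
turns `E[∫_τ^∞ e^{-α t - β X_t} dt; τ < ∞]` into the resolvent integral on the right.
-/

open MeasureTheory ProbabilityTheory Set Filter
open scoped ENNReal NNReal Classical

noncomputable section

namespace AKLevy

variable {Ω : Type*}

/-- Running supremum `X̄_t = sup_{0 ≤ s ≤ t} X_s` of a process. -/
def runSup (X : ℝ → Ω → ℝ) (t : ℝ) (ω : Ω) : ℝ :=
  sSup ((fun s => X s ω) '' Set.Icc 0 t)

/-- Running infimum `X̲_t = inf_{0 ≤ s ≤ t} X_s` of a process. -/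
def runInf (X : ℝ → Ω → ℝ) (t : ℝ) (ω : Ω) : ℝ :=
  sInf ((fun s => X s ω) '' Set.Icc 0 t)

/-- All-time supremum `X̄_∞ = sup_{t ≥ 0} X_t`. -/
def supAll (X : ℝ → Ω → ℝ) (ω : Ω) : ℝ :=
  sSup ((fun s => X s ω) '' Set.Ici 0)

/-- All-time infimum `X̲_∞ = inf_{t ≥ 0} X_t`. -/
def infAll (X : ℝ → Ω → ℝ) (ω : Ω) : ℝ :=
  sInf ((fun s => X s ω) '' Set.Ici 0)

/-- `X` is a real-valued Lévy process with respect to the filtration `ℱ`,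
on a filtered probability space satisfying the usual conditions. -/
structure IsLevy [m0 : MeasurableSpace Ω] (P : Measure Ω) (ℱ : Filtration ℝ m0)
    (X : ℝ → Ω → ℝ) : Prop where
  isProb : IsProbabilityMeasure P
  adapted : ∀ t : ℝ, 0 ≤ t → StronglyMeasurable[ℱ t] (X t)
  zero : ∀ᵐ ω ∂P, X 0 ω = 0
  rightCont : ∀ ω, ∀ t : ℝ, 0 ≤ t → ContinuousWithinAt (fun s => X s ω) (Set.Ici t) t
  leftLim : ∀ ω, ∀ t : ℝ, 0 < t →
    ∃ l : ℝ, Tendsto (fun s => X s ω) (nhdsWithin t (Set.Iio t)) (nhds l)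
  indepIncrements : ∀ s t : ℝ, 0 ≤ s → s ≤ t →
    Indep (MeasurableSpace.comap (fun ω => X t ω - X s ω) inferInstance) (ℱ s) P
  stationary : ∀ s t : ℝ, 0 ≤ s → s ≤ t →
    Measure.map (fun ω => X t ω - X s ω) P = Measure.map (X (t - s)) P
  filtRightCont : ∀ t : ℝ, (ℱ t : MeasurableSpace Ω) = ⨅ s ∈ Set.Ioi t, (ℱ s : MeasurableSpace Ω)
  complete : ∀ N : Set Ω, MeasurableSet N → P N = 0 → MeasurableSet[ℱ 0] N

/-- `τ_x^+ < ∞`: the process passes strictly above level `x` at some nonnegative time. -/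
def hitsAbove (X : ℝ → Ω → ℝ) (x : ℝ) (ω : Ω) : Prop := ∃ t, 0 ≤ t ∧ x < X t ω

/-- First passage time above `x`:  `τ_x^+ = inf {t ≥ 0 : X_t > x}` (junk value if never). -/
def tauAbove (X : ℝ → Ω → ℝ) (x : ℝ) (ω : Ω) : ℝ := sInf {t : ℝ | 0 ≤ t ∧ x < X t ω}

/-- `τ_x^- < ∞`: the process passes strictly below level `x` at some nonnegative time. -/
def hitsBelow (X : ℝ → Ω → ℝ) (x : ℝ) (ω : Ω) : Prop := ∃ t, 0 ≤ t ∧ X t ω < x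

/-- First passage time below `x`:  `τ_x^- = inf {t ≥ 0 : X_t < x}` (junk value if never). -/
def tauBelow (X : ℝ → Ω → ℝ) (x : ℝ) (ω : Ω) : ℝ := sInf {t : ℝ | 0 ≤ t ∧ X t ω < x}

/-- The `[0,∞]`-valued first passage time `σ_x = inf { t ≥ 0 : x + X_t < y }`, with `inf ∅ = ∞`. -/
def hitBelowE (X : ℝ → Ω → ℝ) (y x : ℝ) (ω : Ω) : ℝ≥0∞ :=
  if ∃ t, 0 ≤ t ∧ x + X t ω < y then ENNReal.ofReal (sInf {t : ℝ | 0 ≤ t ∧ x + X t ω < y})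
  else ∞

/-- The stopped clock `t ∧ σ_x` (real-valued), where `σ_x = inf{ t ≥ 0 : x + X_t < y}`. -/
def stoppedClock (X : ℝ → Ω → ℝ) (y x : ℝ) (t : ℝ) (ω : Ω) : ℝ :=
  (min (ENNReal.ofReal t) (hitBelowE X y x ω)).toReal

/-- A `[0,∞]`-valued stopping time of the filtration `ℱ`. -/
def IsStopTime [m0 : MeasurableSpace Ω] (ℱ : Filtration ℝ m0) (τ : Ω → ℝ≥0∞) : Prop :=
  ∀ t : ℝ, 0 ≤ t → MeasurableSet[ℱ t] {ω | τ ω ≤ ENNReal.ofReal t}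

/-- Discounted payoff `e^{-rτ} G(x + X_τ)` at a `[0,∞]`-valued time `τ`, set to `0` on `{τ = ∞}`. -/
def stopPayoff (X : ℝ → Ω → ℝ) (r x : ℝ) (G : ℝ → ℝ) (τ : Ω → ℝ≥0∞) (ω : Ω) : ℝ :=
  if τ ω ≠ ∞ then Real.exp (-(r * (τ ω).toReal)) * G (x + X ((τ ω).toReal) ω) else 0

/-- Discounted American put payoff `e^{-rτ}(K - e^{x + X_τ})^+ 1_{τ < ∞}`. -/
def putPayoff (X : ℝ → Ω → ℝ) (r K x : ℝ) (τ : Ω → ℝ≥0∞) (ω : Ω) : ℝ :=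
  stopPayoff X r x (fun z => max (K - Real.exp z) 0) τ ω

/-- Value function `v(x) = sup_τ E[e^{-rτ}(K - e^{x+X_τ})^+ 1_{τ<∞}]`, the supremum
being over all `[0,∞]`-valued stopping times of `ℱ`. -/
def putValue [m0 : MeasurableSpace Ω] (P : Measure Ω) (ℱ : Filtration ℝ m0)
    (X : ℝ → Ω → ℝ) (r K x : ℝ) : ℝ :=
  ⨆ τ : {τ : Ω → ℝ≥0∞ // IsStopTime ℱ τ}, ∫ ω, putPayoff X r K x τ.1 ω ∂P

/-- `m = E[e^{X̲_{e_r}}]`, where `e_r` is an independent exponential time of rate `r > 0`,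
and `e_0 = ∞`. -/
def mInf [m0 : MeasurableSpace Ω] (P : Measure Ω) (X : ℝ → Ω → ℝ) (r : ℝ) : ℝ :=
  if 0 < r then
    ∫ t in Set.Ioi (0 : ℝ), r * Real.exp (-(r * t)) * (∫ ω, Real.exp (runInf X t ω) ∂P)
  else ∫ ω, Real.exp (infAll X ω) ∂P

/-- `P(X̲_{e_r} = 0)`, where `e_r` is an independent exponential time of rate `r > 0`,
and `e_0 = ∞`. -/
def atomZeroProb [m0 : MeasurableSpace Ω] (P : Measure Ω) (X : ℝ → Ω → ℝ) (r : ℝ) : ℝ :=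
  if 0 < r then
    ∫ t in Set.Ioi (0 : ℝ), r * Real.exp (-(r * t)) * (P {ω | runInf X t ω = 0}).toReal
  else (P {ω | infAll X ω = 0}).toReal

/-- The event `{τ_0^- = 0}`: `0` is (pathwise) immediately reached from below, i.e.
`inf{t ≥ 0 : X_t < 0} = 0`. -/
def regularBelow (X : ℝ → Ω → ℝ) : Set Ω :=
  {ω | ∀ ε > (0 : ℝ), ∃ t, 0 ≤ t ∧ t < ε ∧ X t ω < 0}

/-- `E[e^{-γ X̄_{e_α}}] = ∫_0^∞ α e^{-α t} E[e^{-γ X̄_t}] dt`. -/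
def expSupLT [m0 : MeasurableSpace Ω] (P : Measure Ω) (X : ℝ → Ω → ℝ) (α γ : ℝ) : ℝ :=
  ∫ t in Set.Ioi (0 : ℝ), α * Real.exp (-(α * t)) * (∫ ω, Real.exp (-(γ * runSup X t ω)) ∂P)

/-- The function `h_{α,β}(x) = E[e^{-α σ_x + β (x + X_{σ_x})} 1_{σ_x < ∞}]`, where
`σ_x = inf{t ≥ 0 : x + X_t < 0}`. -/
def hAB [m0 : MeasurableSpace Ω] (P : Measure Ω) (X : ℝ → Ω → ℝ) (α β : ℝ) (z : ℝ) : ℝ :=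
  ∫ ω, (if hitsBelow X (-z) ω then
      Real.exp (-(α * tauBelow X (-z) ω) + β * (z + X (tauBelow X (-z) ω) ω)) else 0) ∂P

/-- `v_y(x) = E[e^{-r σ_x} (K - e^{x + X_{σ_x}})^+ 1_{σ_x<∞}]` where
`σ_x = inf{t ≥ 0 : x + X_t < y}`. -/
def vy [m0 : MeasurableSpace Ω] (P : Measure Ω) (X : ℝ → Ω → ℝ) (r K y : ℝ) (z : ℝ) : ℝ :=
  ∫ ω, putPayoff X r K z (hitBelowE X y z) ω ∂P

/-- The process `f` (indexed by `t ≥ 0`) is a martingale with respect to `ℱ` and `P`. -/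
def MartOn [m0 : MeasurableSpace Ω] (P : Measure Ω) (ℱ : Filtration ℝ m0)
    (f : ℝ → Ω → ℝ) : Prop :=
  (∀ t : ℝ, 0 ≤ t → StronglyMeasurable[ℱ t] (f t)) ∧
  (∀ t : ℝ, 0 ≤ t → Integrable (f t) P) ∧
  ∀ s t : ℝ, 0 ≤ s → s ≤ t → P[f t|ℱ s] =ᵐ[P] f s

/-- The process `f` (indexed by `t ≥ 0`) is a supermartingale w.r.t. `ℱ` and `P`. -/
def SupermartOn [m0 : MeasurableSpace Ω] (P : Measure Ω) (ℱ : Filtration ℝ m0)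
    (f : ℝ → Ω → ℝ) : Prop :=
  (∀ t : ℝ, 0 ≤ t → StronglyMeasurable[ℱ t] (f t)) ∧
  (∀ t : ℝ, 0 ≤ t → Integrable (f t) P) ∧
  ∀ s t : ℝ, 0 ≤ s → s ≤ t → P[f t|ℱ s] ≤ᵐ[P] f s

lemma tendsto_setIntegral_Ioi {E : Type*} [NormedAddCommGroup E] [NormedSpace ℝ E]
    {f : ℝ → E} {a : ℝ} (hf : IntegrableOn f (Ioi a)) {ι : Type*} {l : Filter ι}
    [l.IsCountablyGenerated] {u : ι → ℝ} (hu : Tendsto u l (nhdsWithin a (Ici a))) :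
    Tendsto (fun i => ∫ t in Ioi (u i), f t) l (nhds (∫ t in Ioi a, f t)) := by
  have hrw : (fun i => ∫ t in Ioi a, (Ioi (u i)).indicator f t) =ᶠ[l]
      fun i => ∫ t in Ioi (u i), f t := by
    filter_upwards [hu self_mem_nhdsWithin] with i (hi : a ≤ u i)
    rw [setIntegral_indicator measurableSet_Ioi, Ioi_inter_Ioi, sup_eq_right.2 hi]
  refine Tendsto.congr' hrw (tendsto_integral_filter_of_dominated_convergence (fun t => ‖f t‖)
    (Eventually.of_forall fun i => hf.aestronglyMeasurable.indicator measurableSet_Ioi)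
    (Eventually.of_forall fun i => Eventually.of_forall fun t => norm_indicator_le_norm_self _ _)
    hf.norm ?_)
  filter_upwards [ae_restrict_mem measurableSet_Ioi] with t (ht : a < t)
  refine tendsto_const_nhds.congr' ?_
  filter_upwards [(tendsto_nhdsWithin_iff.1 hu).1.eventually (gt_mem_nhds ht)] with i hi
  exact (indicator_of_mem hi f).symm

lemma integral_integral_swap_of_norm_le {α β E : Type*} [MeasurableSpace α] [MeasurableSpace β]
    [NormedAddCommGroup E] [NormedSpace ℝ E] {μ : Measure α} [IsFiniteMeasure μ] {ν : Measure β}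
    [SFinite ν] {f : α → β → E} (hf : AEStronglyMeasurable (Function.uncurry f) (μ.prod ν))
    {g : β → ℝ} (hg : Integrable g ν) (hfg : ∀ᵐ p ∂μ.prod ν, ‖f p.1 p.2‖ ≤ g p.2) :
    ∫ a, ∫ b, f a b ∂ν ∂μ = ∫ b, ∫ a, f a b ∂μ ∂ν :=
  integral_integral_swap (Integrable.mono' (hg.comp_snd μ) hf hfg)

lemma integrableOn_exp_neg_mul_Ioi {c : ℝ} (hc : 0 < c) (s : ℝ) :
    IntegrableOn (fun t => Real.exp (-(c * t))) (Ioi s) := by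
  simpa only [neg_mul] using exp_neg_integrableOn_Ioi s hc

lemma integral_exp_neg_mul_Ioi {c : ℝ} (hc : 0 < c) (s : ℝ) :
    ∫ t in Ioi s, Real.exp (-(c * t)) = Real.exp (-(c * s)) / c := by
  simpa only [neg_mul, neg_div_neg_eq] using integral_exp_mul_Ioi (neg_lt_zero.2 hc) s

def dyadicCeil (n : ℕ) (t : ℝ) : ℝ := ⌈2 ^ n * t⌉ / 2 ^ n

lemma le_dyadicCeil (n : ℕ) (t : ℝ) : t ≤ dyadicCeil n t := by
  rw [dyadicCeil, le_div_iff₀ (by positivity), mul_comm]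
  exact Int.le_ceil _

lemma dyadicCeil_lt (n : ℕ) (t : ℝ) : dyadicCeil n t < t + (2 ^ n)⁻¹ := by
  rw [dyadicCeil, div_lt_iff₀ (by positivity), add_mul, inv_mul_cancel₀ (by positivity), mul_comm]
  exact Int.ceil_lt_add_one _

lemma dyadicCeil_le_iff {n : ℕ} {t s : ℝ} :
    dyadicCeil n t ≤ s ↔ t ≤ ⌊2 ^ n * s⌋ / 2 ^ n := by
  have h2n : (0 : ℝ) < 2 ^ n := by positivity
  rw [dyadicCeil, div_le_iff₀ h2n, le_div_iff₀ h2n, mul_comm s, mul_comm t, ← Int.le_floor,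
    Int.ceil_le]

lemma tendsto_dyadicCeil (t : ℝ) :
    Tendsto (fun n => dyadicCeil n t) atTop (nhdsWithin t (Ici t)) := by
  refine tendsto_nhdsWithin_iff.2 ⟨?_, Eventually.of_forall fun n => le_dyadicCeil n t⟩
  have h : Tendsto (fun n : ℕ => t + ((2 : ℝ) ^ n)⁻¹) atTop (nhds t) := by
    simpa using tendsto_const_nhds.add
      (tendsto_inv_atTop_zero.comp (tendsto_pow_atTop_atTop_of_one_lt (one_lt_two (α := ℝ))))
  exact tendsto_of_tendsto_of_tendsto_of_le_of_le tendsto_const_nhds h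
    (fun n => le_dyadicCeil n t) fun n => (dyadicCeil_lt n t).le

lemma measurable_dyadicCeil (n : ℕ) : Measurable (dyadicCeil n) :=
  (measurable_from_top.comp (measurable_id.const_mul _).ceil).div_const _

lemma countable_range_dyadicCeil (n : ℕ) : (range (dyadicCeil n)).Countable :=
  (countable_range fun k : ℤ => (k : ℝ) / 2 ^ n).mono <| by
    rintro _ ⟨t, rfl⟩
    exact ⟨_, rfl⟩

section Measurability

variable [MeasurableSpace Ω]

lemma measurable_uncurry_comp_of_countable_range {α : Type*} [MeasurableSpace α]
    {X : ℝ → Ω → ℝ} {u : α → ℝ} (hu : Measurable u) (hcount : (range u).Countable)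
    (hX : ∀ s ∈ range u, Measurable (X s)) :
    Measurable fun p : α × Ω => X (u p.1) p.2 := by
  have : Countable (range u) := hcount.to_subtype
  have hXu : Measurable fun q : Ω × range u => X q.2 q.1 :=
    measurable_from_prod_countable_left fun s => hX s s.2
  exact hXu.comp (measurable_snd.prodMk
    ((hu.comp measurable_fst).subtype_mk (h := fun p => mem_range_self p.1)))

lemma measurable_uncurry_max_of_continuousWithinAt {X : ℝ → Ω → ℝ}
    (hX : ∀ t, 0 ≤ t → Measurable (X t))
    (hcont : ∀ ω, ∀ t, 0 ≤ t → ContinuousWithinAt (fun s => X s ω) (Ici t) t) :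
    Measurable fun p : ℝ × Ω => X (max p.1 0) p.2 := by
  have hmax : Measurable fun t : ℝ => max t 0 := measurable_id.max measurable_const
  have happrox (n : ℕ) : Measurable fun p : ℝ × Ω => X (dyadicCeil n (max p.1 0)) p.2 :=
    measurable_uncurry_comp_of_countable_range ((measurable_dyadicCeil n).comp hmax)
      ((countable_range_dyadicCeil n).mono (range_comp_subset_range _ _))
      fun _ ⟨t, hs⟩ => hX _ (hs ▸ (le_max_right t 0).trans (le_dyadicCeil n _))
  exact measurable_of_tendsto_metrizable happrox <| tendsto_pi_nhds.2 fun p =>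
    (hcont p.2 _ (le_max_right _ _)).tendsto.comp (tendsto_dyadicCeil _)

end Measurability

/-- The process is read at `max t 0` so that this is jointly measurable on `ℝ × Ω`. -/
def discountedExp (α β : ℝ) (X : ℝ → Ω → ℝ) (t : ℝ) (ω : Ω) : ℝ :=
  Real.exp (-(α * t) - β * X (max t 0) ω)

section Discounted

variable {X : ℝ → Ω → ℝ} {α β t : ℝ} {ω : Ω}

lemma discountedExp_of_nonneg (ht : 0 ≤ t) :
    discountedExp α β X t ω = Real.exp (-(α * t) - β * X t ω) := by
  rw [discountedExp, max_eq_left ht]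

lemma discountedExp_eq_mul (ht : 0 ≤ t) :
    discountedExp α β X t ω = Real.exp (-(α * t)) * Real.exp (-(β * X t ω)) := by
  rw [discountedExp_of_nonneg ht, ← Real.exp_add]
  ring_nf

lemma norm_discountedExp_le (hβ : 0 ≤ β) (hX : 0 ≤ X (max t 0) ω) :
    ‖discountedExp α β X t ω‖ ≤ Real.exp (-(α * t)) := by
  rw [discountedExp, Real.norm_eq_abs, Real.abs_exp, Real.exp_le_exp]
  nlinarith [mul_nonneg hβ hX]

lemma norm_discountedExp_le_one (hα : 0 ≤ α) (hβ : 0 ≤ β) (ht : 0 ≤ t) (hX : 0 ≤ X t ω) :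
    ‖discountedExp α β X t ω‖ ≤ 1 :=
  (norm_discountedExp_le hβ (by rwa [max_eq_left ht])).trans
    (Real.exp_le_one_iff.2 (by nlinarith))

lemma integrableOn_discountedExp_Ioi (hα : 0 < α) (hβ : 0 ≤ β)
    (hXm : Measurable fun t => X (max t 0) ω) (hX : ∀ t, 0 ≤ t → 0 ≤ X t ω) (s : ℝ) :
    IntegrableOn (fun t => discountedExp α β X t ω) (Ioi s) := by
  refine Integrable.mono' (integrableOn_exp_neg_mul_Ioi hα s) ?_
    (Eventually.of_forall fun t => norm_discountedExp_le hβ (hX _ (le_max_right t 0)))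
  exact (Real.measurable_exp.comp ((measurable_id.const_mul α).neg.sub
    (hXm.const_mul β))).aestronglyMeasurable

lemma norm_integral_discountedExp_Ioi_le (hα : 0 < α) (hβ : 0 ≤ β)
    (hX : ∀ t, 0 ≤ t → 0 ≤ X t ω) {s : ℝ} (hs : 0 ≤ s) :
    ‖∫ t in Ioi s, discountedExp α β X t ω‖ ≤ 1 / α := by
  calc ‖∫ t in Ioi s, discountedExp α β X t ω‖
      ≤ ∫ t in Ioi s, Real.exp (-(α * t)) :=
        norm_integral_le_of_norm_le (integrableOn_exp_neg_mul_Ioi hα s)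
          (Eventually.of_forall fun t => norm_discountedExp_le hβ (hX _ (le_max_right t 0)))
    _ = Real.exp (-(α * s)) / α := integral_exp_neg_mul_Ioi hα s
    _ ≤ 1 / α := by gcongr; exact Real.exp_le_one_iff.2 (by nlinarith)

end Discounted

def timeOn (A : Set Ω) (T : Ω → ℝ) (ω : Ω) : WithTop ℝ := if ω ∈ A then (T ω : WithTop ℝ) else ⊤

section TimeOn

variable {A : Set Ω} {T : Ω → ℝ}

lemma setOf_timeOn_le (s : ℝ) : {ω | timeOn A T ω ≤ s} = A ∩ {ω | T ω ≤ s} := by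
  ext ω
  by_cases hω : ω ∈ A <;> simp [timeOn, hω]

lemma setOf_timeOn_lt (s : ℝ) : {ω | timeOn A T ω < s} = A ∩ {ω | T ω < s} := by
  ext ω
  by_cases hω : ω ∈ A <;> simp [timeOn, hω]

lemma setOf_timeOn_eq (s : ℝ) : {ω | timeOn A T ω = s} = A ∩ T ⁻¹' {s} := by
  ext ω
  by_cases hω : ω ∈ A <;> simp [timeOn, hω]

lemma countable_range_timeOn (h : (range T).Countable) : (range (timeOn A T)).Countable :=
  ((h.image ((↑) : ℝ → WithTop ℝ)).insert ⊤).mono <| by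
    rintro _ ⟨ω, rfl⟩
    by_cases hω : ω ∈ A <;> simp [timeOn, hω]

variable [m0 : MeasurableSpace Ω] {ℱ : Filtration ℝ m0}

lemma isStoppingTime_timeOn_dyadicCeil (hT : IsStoppingTime ℱ (timeOn A T)) (n : ℕ) :
    IsStoppingTime ℱ (timeOn A fun ω => dyadicCeil n (T ω)) := by
  intro s
  have h := hT (⌊2 ^ n * s⌋ / 2 ^ n)
  rw [setOf_timeOn_le] at h ⊢
  simp_rw [dyadicCeil_le_iff]
  refine ℱ.mono ?_ _ h
  rw [div_le_iff₀ (by positivity), mul_comm]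
  exact Int.floor_le _

lemma measurableSet_of_isStoppingTime_timeOn (hT : IsStoppingTime ℱ (timeOn A T)) :
    MeasurableSet A := by
  have hA : A = ⋃ n : ℕ, A ∩ {ω | T ω ≤ n} := by
    ext ω
    simp only [mem_iUnion, mem_inter_iff, mem_ofPred_eq]
    exact ⟨fun h => (exists_nat_ge (T ω)).imp fun _ hn => ⟨h, hn⟩, fun ⟨_, h, _⟩ => h⟩
  rw [hA]
  exact MeasurableSet.iUnion fun n => ℱ.le n _ (setOf_timeOn_le (n : ℝ) ▸ hT n)

end TimeOn

section Passage

variable {X : ℝ → Ω → ℝ} {x : ℝ} {ω : Ω}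

lemma tauAbove_nonneg (X : ℝ → Ω → ℝ) (x : ℝ) (ω : Ω) : 0 ≤ tauAbove X x ω :=
  Real.sInf_nonneg fun _ ht => ht.1

lemma tauAbove_eq_zero_of_not_hitsAbove (h : ¬hitsAbove X x ω) : tauAbove X x ω = 0 := by
  have hempty : {t : ℝ | 0 ≤ t ∧ x < X t ω} = ∅ := eq_empty_of_forall_notMem fun t ht => h ⟨t, ht⟩
  rw [tauAbove, hempty, Real.sInf_empty]

lemma tauAbove_le_of_lt {t : ℝ} (ht : 0 ≤ t) (h : x < X t ω) : tauAbove X x ω ≤ t :=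
  csInf_le ⟨0, fun _ hu => hu.1⟩ ⟨ht, h⟩

lemma lt_of_tauAbove_lt (hmono : MonotoneOn (fun s => X s ω) (Ici 0)) (hh : hitsAbove X x ω)
    {t : ℝ} (ht : tauAbove X x ω < t) : x < X t ω := by
  obtain ⟨s, ⟨hs0, hxs⟩, hst⟩ := (csInf_lt_iff ⟨0, fun _ hu => hu.1⟩ hh).1 ht
  exact hxs.trans_le (hmono hs0 (hs0.trans hst.le) hst.le)

lemma hitsAbove_and_tauAbove_lt_iff (hmono : MonotoneOn (fun s => X s ω) (Ici 0)) {s : ℝ} :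
    hitsAbove X x ω ∧ tauAbove X x ω < s ↔ ∃ q : ℚ, 0 ≤ (q : ℝ) ∧ (q : ℝ) < s ∧ x < X q ω := by
  constructor
  · rintro ⟨hh, hlt⟩
    obtain ⟨t, ⟨ht0, hxt⟩, hts⟩ := (csInf_lt_iff ⟨0, fun _ hu => hu.1⟩ hh).1 hlt
    obtain ⟨q, htq, hqs⟩ := exists_rat_btwn hts
    exact ⟨q, ht0.trans htq.le, hqs, hxt.trans_le (hmono ht0 (ht0.trans htq.le) htq.le)⟩
  · rintro ⟨q, hq0, hqs, hxq⟩
    exact ⟨⟨q, hq0, hxq⟩, (tauAbove_le_of_lt hq0 hxq).trans_lt hqs⟩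

lemma indicator_integral_discountedExp_Ioi_tauAbove {α β : ℝ}
    (hmono : MonotoneOn (fun s => X s ω) (Ici 0)) :
    {ω | hitsAbove X x ω}.indicator
        (fun ω => ∫ t in Ioi (tauAbove X x ω), discountedExp α β X t ω) ω =
      ∫ t in Ioi 0, Real.exp (-(α * t)) * (if x < X t ω then Real.exp (-(β * X t ω)) else 0) := by
  by_cases hh : ω ∈ {ω | hitsAbove X x ω}
  · rw [indicator_of_mem hh, ← sup_eq_right.2 (tauAbove_nonneg X x ω), ← Ioi_inter_Ioi,
      ← setIntegral_indicator measurableSet_Ioi]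
    refine setIntegral_congr_ae measurableSet_Ioi ?_
    filter_upwards [(countable_singleton (tauAbove X x ω)).ae_notMem volume] with t hne ht
    rcases lt_or_gt_of_ne (show t ≠ tauAbove X x ω from hne) with hlt | hgt
    · have hnx : ¬x < X t ω := fun h => (tauAbove_le_of_lt (le_of_lt ht) h).not_gt hlt
      rw [indicator_of_notMem (notMem_Ioi.2 hlt.le), if_neg hnx, mul_zero]
    · rw [indicator_of_mem (mem_Ioi.2 hgt), if_pos (lt_of_tauAbove_lt hmono hh hgt),
        discountedExp_eq_mul (le_of_lt ht)]
  · rw [indicator_of_notMem hh, eq_comm]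
    refine setIntegral_eq_zero_of_forall_eq_zero fun t (ht : 0 < t) => ?_
    rw [if_neg fun h => hh ⟨t, ht.le, h⟩, mul_zero]

end Passage

namespace IsLevy

variable [m0 : MeasurableSpace Ω] {P : Measure Ω} {ℱ : Filtration ℝ m0} {X : ℝ → Ω → ℝ}
  {α β : ℝ}

lemma measurable (hX : IsLevy P ℱ X) {t : ℝ} (ht : 0 ≤ t) : Measurable (X t) :=
  (hX.adapted t ht).measurable.mono (ℱ.le t) le_rfl

lemma measurable_uncurry_max (hX : IsLevy P ℱ X) :
    Measurable fun p : ℝ × Ω => X (max p.1 0) p.2 :=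
  measurable_uncurry_max_of_continuousWithinAt (fun _ => hX.measurable) hX.rightCont

lemma measurable_discountedExp (hX : IsLevy P ℱ X) (α β : ℝ) :
    Measurable fun p : ℝ × Ω => discountedExp α β X p.1 p.2 :=
  Real.measurable_exp.comp ((measurable_fst.const_mul α).neg.sub
    (hX.measurable_uncurry_max.const_mul β))

lemma stronglyMeasurable_integral_discountedExp_Ioi (hX : IsLevy P ℱ X) (α β : ℝ)
    {u : Ω → ℝ} (hu : Measurable u) :
    StronglyMeasurable fun ω => ∫ t in Ioi (u ω), discountedExp α β X t ω := by
  simp_rw [← integral_indicator measurableSet_Ioi]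
  refine StronglyMeasurable.integral_prod_right'
    (f := fun p : Ω × ℝ => (Ioi (u p.1)).indicator (discountedExp α β X · p.1) p.2) ?_
  simp only [indicator_apply, mem_Ioi]
  exact (Measurable.ite (measurableSet_lt (hu.comp measurable_fst) measurable_snd)
    ((hX.measurable_discountedExp α β).comp measurable_swap) measurable_const).stronglyMeasurable

lemma isRightContinuous (hX : IsLevy P ℱ X) : ℱ.IsRightContinuous :=
  ⟨fun t => (Filtration.rightCont_eq ℱ t).trans_le (hX.filtRightCont t).ge⟩

lemma ae_nonneg (hX : IsLevy P ℱ X) (hmono : ∀ ω, MonotoneOn (fun s => X s ω) (Ici 0)) :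
    ∀ᵐ ω ∂P, ∀ t, 0 ≤ t → 0 ≤ X t ω := by
  filter_upwards [hX.zero] with ω h0 t ht
  exact h0 ▸ hmono ω self_mem_Ici ht ht

lemma setIntegral_exp_neg_mul (hX : IsLevy P ℱ X) {s t : ℝ} (hs : 0 ≤ s) (hst : s ≤ t)
    {A : Set Ω} (hA : MeasurableSet[ℱ s] A) (β : ℝ) :
    ∫ ω in A, Real.exp (-(β * X t ω)) ∂P =
      (∫ ω, Real.exp (-(β * X (t - s) ω)) ∂P) * ∫ ω in A, Real.exp (-(β * X s ω)) ∂P := by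
  have hAm : MeasurableSet A := ℱ.le s _ hA
  have hexp : Measurable fun y : ℝ => Real.exp (-(β * y)) :=
    Real.measurable_exp.comp (measurable_id.const_mul β).neg
  set f : Ω → ℝ := fun ω => Real.exp (-(β * (X t ω - X s ω)))
  set g : Ω → ℝ := A.indicator fun ω => Real.exp (-(β * X s ω))
  have hgm : Measurable[ℱ s] g := (hexp.comp (hX.adapted s hs).measurable).indicator hA
  have hindep : IndepFun f g P :=
    indep_of_indep_of_le_left (indep_of_indep_of_le_right (hX.indepIncrements s t hs hst)
      (measurable_iff_comap_le.1 hgm))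
      (by rw [show f = (fun y => Real.exp (-(β * y))) ∘ fun ω => X t ω - X s ω from rfl,
            ← MeasurableSpace.comap_comp]
          exact MeasurableSpace.comap_mono (measurable_iff_comap_le.1 hexp))
  have hincr : Measurable fun ω => X t ω - X s ω :=
    (hX.measurable (hs.trans hst)).sub (hX.measurable hs)
  have hf : ∫ ω, f ω ∂P = ∫ ω, Real.exp (-(β * X (t - s) ω)) ∂P := by
    rw [← integral_map (f := fun y => Real.exp (-(β * y))) hincr.aemeasurable
      hexp.aestronglyMeasurable, hX.stationary s t hs hst,
      integral_map (hX.measurable (sub_nonneg.2 hst)).aemeasurable hexp.aestronglyMeasurable]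
  calc ∫ ω in A, Real.exp (-(β * X t ω)) ∂P = ∫ ω, f ω * g ω ∂P := by
        rw [← integral_indicator hAm]
        congr 1
        ext ω
        by_cases hω : ω ∈ A
        · simp only [f, g, indicator_of_mem hω, ← Real.exp_add]
          ring_nf
        · simp [f, g, indicator_of_notMem hω]
    _ = (∫ ω, f ω ∂P) * ∫ ω, g ω ∂P :=
        hindep.integral_mul_eq_mul_integral (hexp.comp hincr).aestronglyMeasurable
          (hgm.mono (ℱ.le s) le_rfl).aestronglyMeasurable
    _ = _ := by rw [hf, integral_indicator hAm]

lemma mul_setIntegral_integral_discountedExp_Ioi (hX : IsLevy P ℱ X)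
    (hX0 : ∀ᵐ ω ∂P, ∀ t, 0 ≤ t → 0 ≤ X t ω) {c : ℝ} (hα : 0 < α) (hβ : 0 ≤ β)
    (hαc : 0 < α + c)
    (hLap : ∀ t, 0 ≤ t → ∫ ω, Real.exp (-(β * X t ω)) ∂P = Real.exp (-(t * c)))
    {s : ℝ} (hs : 0 ≤ s) {A : Set Ω} (hA : MeasurableSet[ℱ s] A) :
    (α + c) * ∫ ω in A, (∫ t in Ioi s, discountedExp α β X t ω) ∂P =
      ∫ ω in A, discountedExp α β X s ω ∂P := by
  have := hX.isProb
  have hslice : ∀ t ∈ Ioi s, ∫ ω in A, discountedExp α β X t ω ∂P =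
      Real.exp (s * c) * (∫ ω in A, Real.exp (-(β * X s ω)) ∂P) * Real.exp (-((α + c) * t)) := by
    intro t (ht : s < t)
    have hexp : Real.exp (-(α * t)) * Real.exp (-((t - s) * c)) =
        Real.exp (s * c) * Real.exp (-((α + c) * t)) := by
      rw [← Real.exp_add, ← Real.exp_add]
      ring_nf
    simp_rw [discountedExp_eq_mul (hs.trans ht.le)]
    rw [integral_const_mul, hX.setIntegral_exp_neg_mul hs ht.le hA, hLap _ (sub_nonneg.2 ht.le)]
    linear_combination (∫ ω in A, Real.exp (-(β * X s ω)) ∂P) * hexp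
  have hswap : ∫ ω in A, (∫ t in Ioi s, discountedExp α β X t ω) ∂P =
      ∫ t in Ioi s, ∫ ω in A, discountedExp α β X t ω ∂P := by
    refine integral_integral_swap_of_norm_le (f := fun ω t => discountedExp α β X t ω)
      ((hX.measurable_discountedExp α β).comp measurable_swap).aestronglyMeasurable
      (integrableOn_exp_neg_mul_Ioi hα s) ?_
    filter_upwards [Measure.quasiMeasurePreserving_fst.ae (ae_restrict_of_ae hX0)] with p hp
    exact norm_discountedExp_le hβ (hp _ (le_max_right _ _))
  have hexp : Real.exp (s * c) * Real.exp (-((α + c) * s)) = Real.exp (-(α * s)) := by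
    rw [← Real.exp_add]
    ring_nf
  rw [hswap, setIntegral_congr_fun measurableSet_Ioi hslice, integral_const_mul,
    integral_exp_neg_mul_Ioi hαc, setIntegral_congr_fun (ℱ.le s _ hA)
      fun ω _ => discountedExp_eq_mul hs, integral_const_mul, ← hexp]
  field_simp

lemma isStoppingTime_timeOn_tauAbove (hX : IsLevy P ℱ X)
    (hmono : ∀ ω, MonotoneOn (fun s => X s ω) (Ici 0)) (x : ℝ) :
    IsStoppingTime ℱ (timeOn {ω | hitsAbove X x ω} (tauAbove X x)) := by
  have := hX.isRightContinuous
  refine isStoppingTime_of_measurableSet_lt_of_isRightContinuous fun s => ?_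
  have hset : {ω | timeOn {ω | hitsAbove X x ω} (tauAbove X x) ω < s} =
      ⋃ (q : ℚ) (_ : 0 ≤ (q : ℝ) ∧ (q : ℝ) < s), {ω | x < X q ω} := by
    ext ω
    simp only [setOf_timeOn_lt, mem_inter_iff, mem_ofPred_eq, mem_iUnion, exists_prop,
      hitsAbove_and_tauAbove_lt_iff (hmono ω), and_assoc]
  rw [hset]
  exact MeasurableSet.iUnion fun q => MeasurableSet.iUnion fun hq =>
    ℱ.mono hq.2.le _ ((hX.adapted q hq.1).measurable measurableSet_Ioi)

lemma measurable_tauAbove (hX : IsLevy P ℱ X)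
    (hmono : ∀ ω, MonotoneOn (fun s => X s ω) (Ici 0)) (x : ℝ) :
    Measurable (tauAbove X x) := by
  have hτ := hX.isStoppingTime_timeOn_tauAbove hmono x
  refine measurable_of_Iic fun s => ?_
  have hset : tauAbove X x ⁻¹' Iic s = {ω | timeOn {ω | hitsAbove X x ω} (tauAbove X x) ω ≤ s} ∪
      ({ω | hitsAbove X x ω}ᶜ ∩ {_ω | 0 ≤ s}) := by
    ext ω
    by_cases hh : hitsAbove X x ω <;>
      simp [setOf_timeOn_le, hh, tauAbove_eq_zero_of_not_hitsAbove]
  rw [hset]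
  exact (ℱ.le s _ (hτ s)).union
    ((measurableSet_of_isStoppingTime_timeOn hτ).compl.inter (MeasurableSet.const _))

lemma integrable_discountedExp_comp (hX : IsLevy P ℱ X) (hX0 : ∀ᵐ ω ∂P, ∀ t, 0 ≤ t → 0 ≤ X t ω)
    (hα : 0 ≤ α) (hβ : 0 ≤ β) {T : Ω → ℝ} (hTm : Measurable T) (hT0 : ∀ ω, 0 ≤ T ω) :
    Integrable (fun ω => discountedExp α β X (T ω) ω) P := by
  have := hX.isProb
  refine Integrable.mono' (integrable_const 1)
    ((hX.measurable_discountedExp α β).comp (hTm.prodMk measurable_id)).aestronglyMeasurable ?_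
  filter_upwards [hX0] with ω hω
  exact norm_discountedExp_le_one hα hβ (hT0 ω) (hω _ (hT0 ω))

lemma integrable_integral_discountedExp_Ioi (hX : IsLevy P ℱ X)
    (hX0 : ∀ᵐ ω ∂P, ∀ t, 0 ≤ t → 0 ≤ X t ω) (hα : 0 < α) (hβ : 0 ≤ β) {T : Ω → ℝ}
    (hTm : Measurable T) (hT0 : ∀ ω, 0 ≤ T ω) :
    Integrable (fun ω => ∫ t in Ioi (T ω), discountedExp α β X t ω) P := by
  have := hX.isProb
  refine Integrable.mono' (integrable_const (1 / α))
    (hX.stronglyMeasurable_integral_discountedExp_Ioi α β hTm).aestronglyMeasurable ?_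
  filter_upwards [hX0] with ω hω
  exact norm_integral_discountedExp_Ioi_le hα hβ hω (hT0 ω)

lemma setIntegral_discountedExp_eq_of_countable_range (hX : IsLevy P ℱ X)
    (hX0 : ∀ᵐ ω ∂P, ∀ t, 0 ≤ t → 0 ≤ X t ω) {c : ℝ} (hα : 0 < α) (hβ : 0 ≤ β)
    (hαc : 0 < α + c)
    (hLap : ∀ t, 0 ≤ t → ∫ ω, Real.exp (-(β * X t ω)) ∂P = Real.exp (-(t * c)))
    {A : Set Ω} {T : Ω → ℝ} (hT : IsStoppingTime ℱ (timeOn A T)) (hTm : Measurable T)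
    (hT0 : ∀ ω, 0 ≤ T ω) (hTc : (range T).Countable) :
    ∫ ω in A, discountedExp α β X (T ω) ω ∂P =
      (α + c) * ∫ ω in A, (∫ t in Ioi (T ω), discountedExp α β X t ω) ∂P := by
  have : Countable (range T) := hTc.to_subtype
  have hpiece (s : ℝ) : MeasurableSet[ℱ s] (A ∩ T ⁻¹' {s}) :=
    setOf_timeOn_eq s ▸ hT.measurableSet_eq_of_countable_range (countable_range_timeOn hTc) s
  have hmeas (s : range T) : MeasurableSet (A ∩ T ⁻¹' {(s : ℝ)}) := ℱ.le _ _ (hpiece s)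
  have hdisj : Pairwise (Function.onFun Disjoint fun s : range T => A ∩ T ⁻¹' {(s : ℝ)}) :=
    fun s s' hss' => ((disjoint_singleton.2 (Subtype.coe_ne_coe.2 hss')).preimage T).mono
      inter_subset_right inter_subset_right
  have hA : A = ⋃ s : range T, A ∩ T ⁻¹' {(s : ℝ)} := by
    ext ω
    simp
  rw [hA, integral_iUnion hmeas hdisj
      (integrable_discountedExp_comp hX hX0 hα.le hβ hTm hT0).integrableOn,
    integral_iUnion hmeas hdisj
      (integrable_integral_discountedExp_Ioi hX hX0 hα hβ hTm hT0).integrableOn,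
    ← tsum_mul_left]
  refine tsum_congr fun ⟨s, ω₀, hs⟩ => ?_
  have hpiece_eq (F : ℝ → Ω → ℝ) :
      ∫ ω in A ∩ T ⁻¹' {s}, F (T ω) ω ∂P = ∫ ω in A ∩ T ⁻¹' {s}, F s ω ∂P :=
    setIntegral_congr_fun (hmeas ⟨s, ω₀, hs⟩) fun ω hω => by rw [show T ω = s from hω.2]
  calc ∫ ω in A ∩ T ⁻¹' {s}, discountedExp α β X (T ω) ω ∂P
      = ∫ ω in A ∩ T ⁻¹' {s}, discountedExp α β X s ω ∂P := hpiece_eq _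
    _ = (α + c) * ∫ ω in A ∩ T ⁻¹' {s}, (∫ t in Ioi s, discountedExp α β X t ω) ∂P :=
        (hX.mul_setIntegral_integral_discountedExp_Ioi hX0 hα hβ hαc hLap (hs ▸ hT0 ω₀)
          (hpiece s)).symm
    _ = (α + c) * ∫ ω in A ∩ T ⁻¹' {s}, (∫ t in Ioi (T ω), discountedExp α β X t ω) ∂P := by
        congr 1
        exact (hpiece_eq fun u ω => ∫ t in Ioi u, discountedExp α β X t ω).symm

lemma tendsto_setIntegral_discountedExp (hX : IsLevy P ℱ X)
    (hX0 : ∀ᵐ ω ∂P, ∀ t, 0 ≤ t → 0 ≤ X t ω) (hα : 0 ≤ α) (hβ : 0 ≤ β) (A : Set Ω)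
    {T : ℕ → Ω → ℝ} {T' : Ω → ℝ} (hTm : ∀ n, Measurable (T n)) (hT0 : ∀ n ω, 0 ≤ T n ω)
    (hT'0 : ∀ ω, 0 ≤ T' ω)
    (hlim : ∀ ω, Tendsto (fun n => T n ω) atTop (nhdsWithin (T' ω) (Ici (T' ω)))) :
    Tendsto (fun n => ∫ ω in A, discountedExp α β X (T n ω) ω ∂P) atTop
      (nhds (∫ ω in A, discountedExp α β X (T' ω) ω ∂P)) := by
  have := hX.isProb
  refine tendsto_integral_of_dominated_convergence (fun _ => 1) (fun n =>
      ((hX.measurable_discountedExp α β).comp ((hTm n).prodMk measurable_id)).aestronglyMeasurable)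
    (integrable_const 1) (fun n => ?_) (ae_of_all _ fun ω => ?_)
  · filter_upwards [ae_restrict_of_ae hX0] with ω hω
    exact norm_discountedExp_le_one hα hβ (hT0 n ω) (hω _ (hT0 n ω))
  · have hXlim := (hX.rightCont ω _ (hT'0 ω)).tendsto.comp (hlim ω)
    simp only [discountedExp_of_nonneg (hT0 _ ω), discountedExp_of_nonneg (hT'0 ω)]
    exact (Real.continuous_exp.tendsto _).comp
      (((hlim ω).mono_right nhdsWithin_le_nhds).const_mul α |>.neg.sub (hXlim.const_mul β))

lemma tendsto_setIntegral_integral_discountedExp_Ioi (hX : IsLevy P ℱ X)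
    (hX0 : ∀ᵐ ω ∂P, ∀ t, 0 ≤ t → 0 ≤ X t ω) (hα : 0 < α) (hβ : 0 ≤ β) (A : Set Ω)
    {T : ℕ → Ω → ℝ} {T' : Ω → ℝ} (hTm : ∀ n, Measurable (T n)) (hT0 : ∀ n ω, 0 ≤ T n ω)
    (hlim : ∀ ω, Tendsto (fun n => T n ω) atTop (nhdsWithin (T' ω) (Ici (T' ω)))) :
    Tendsto (fun n => ∫ ω in A, (∫ t in Ioi (T n ω), discountedExp α β X t ω) ∂P) atTop
      (nhds (∫ ω in A, (∫ t in Ioi (T' ω), discountedExp α β X t ω) ∂P)) := by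
  have := hX.isProb
  refine tendsto_integral_of_dominated_convergence (fun _ => 1 / α) (fun n =>
      (hX.stronglyMeasurable_integral_discountedExp_Ioi α β (hTm n)).aestronglyMeasurable)
    (integrable_const _) (fun n => ?_) ?_
  · filter_upwards [ae_restrict_of_ae hX0] with ω hω
    exact norm_integral_discountedExp_Ioi_le hα hβ hω (hT0 n ω)
  · filter_upwards [ae_restrict_of_ae hX0] with ω hω
    exact tendsto_setIntegral_Ioi (integrableOn_discountedExp_Ioi hα hβ
      (hX.measurable_uncurry_max.comp (measurable_id.prodMk measurable_const)) hω _) (hlim ω)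

lemma setIntegral_integral_discountedExp_Ioi_tauAbove (hX : IsLevy P ℱ X)
    (hmono : ∀ ω, MonotoneOn (fun s => X s ω) (Ici 0)) (hα : 0 < α) (hβ : 0 ≤ β)
    (x : ℝ) :
    ∫ ω in {ω | hitsAbove X x ω}, (∫ t in Ioi (tauAbove X x ω), discountedExp α β X t ω) ∂P =
      ∫ t in Ioi (0 : ℝ), Real.exp (-(α * t)) *
        ∫ ω, (if x < X t ω then Real.exp (-(β * X t ω)) else 0) ∂P := by
  have := hX.isProb
  have hY : Measurable fun p : Ω × ℝ => X (max p.2 0) p.1 :=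
    hX.measurable_uncurry_max.comp measurable_swap
  have hmeas : AEStronglyMeasurable (Function.uncurry fun ω t => Real.exp (-(α * t)) *
      (if x < X t ω then Real.exp (-(β * X t ω)) else 0)) (P.prod (volume.restrict (Ioi 0))) := by
    refine (Measurable.aestronglyMeasurable (f := fun p : Ω × ℝ => Real.exp (-(α * p.2)) *
        (if x < X (max p.2 0) p.1 then Real.exp (-(β * X (max p.2 0) p.1)) else 0))
      ((Real.measurable_exp.comp (measurable_snd.const_mul α).neg).mul
        (Measurable.ite (measurableSet_lt measurable_const hY)
          (Real.measurable_exp.comp (hY.const_mul β).neg) measurable_const))).congr ?_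
    filter_upwards [Measure.quasiMeasurePreserving_snd.ae (ae_restrict_mem measurableSet_Ioi)]
      with p (hp : 0 < p.2)
    simp only [Function.uncurry, max_eq_left hp.le]
  have hbound : ∀ᵐ p ∂P.prod (volume.restrict (Ioi 0)), ‖Real.exp (-(α * p.2)) *
      (if x < X p.2 p.1 then Real.exp (-(β * X p.2 p.1)) else 0)‖ ≤ Real.exp (-(α * p.2)) := by
    filter_upwards [Measure.quasiMeasurePreserving_fst.ae (hX.ae_nonneg hmono),
      Measure.quasiMeasurePreserving_snd.ae (ae_restrict_mem measurableSet_Ioi)]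
      with p hp (hp2 : 0 < p.2)
    rw [norm_mul, Real.norm_of_nonneg (Real.exp_pos _).le]
    refine mul_le_of_le_one_right (Real.exp_pos _).le ?_
    split_ifs
    · rw [Real.norm_of_nonneg (Real.exp_pos _).le, Real.exp_le_one_iff]
      nlinarith [mul_nonneg hβ (hp p.2 hp2.le)]
    · simp
  rw [← integral_indicator (measurableSet_of_isStoppingTime_timeOn
      (hX.isStoppingTime_timeOn_tauAbove hmono x)),
    integral_congr_ae
      (ae_of_all _ fun ω => indicator_integral_discountedExp_Ioi_tauAbove (hmono ω)),
    integral_integral_swap_of_norm_le hmeas (integrableOn_exp_neg_mul_Ioi hα 0) hbound]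
  simp_rw [integral_const_mul]

end IsLevy

theorem stmt7_general [m0 : MeasurableSpace Ω] (P : Measure Ω) (ℱ : Filtration ℝ m0)
    (X : ℝ → Ω → ℝ) (hX : IsLevy P ℱ X)
    (hmono : ∀ ω, MonotoneOn (fun s => X s ω) (Set.Ici 0))
    (φ : ℝ → ℝ) (hφ0 : ∀ l : ℝ, 0 ≤ l → 0 ≤ φ l)
    (hφ : ∀ t l : ℝ, 0 ≤ t → 0 ≤ l →
      (∫ ω, Real.exp (-(l * X t ω)) ∂P) = Real.exp (-(t * φ l)))
    (α β x : ℝ) (hα : 0 < α) (hβ : 0 ≤ β) :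
    (∫ ω, (if hitsAbove X x ω then
        Real.exp (-(α * tauAbove X x ω) - β * X (tauAbove X x ω) ω) else 0) ∂P) =
      (α + φ β) * ∫ t in Set.Ioi (0 : ℝ), Real.exp (-(α * t)) *
        (∫ ω, (if x < X t ω then Real.exp (-(β * X t ω)) else 0) ∂P) := by
  set H := {ω | hitsAbove X x ω}
  have hτ := hX.isStoppingTime_timeOn_tauAbove hmono x
  have hX0 := hX.ae_nonneg hmono
  have hτ0 := tauAbove_nonneg X x
  have hTm (n : ℕ) : Measurable fun ω => dyadicCeil n (tauAbove X x ω) :=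
    (measurable_dyadicCeil n).comp (hX.measurable_tauAbove hmono x)
  have hT0 (n : ℕ) (ω : Ω) : 0 ≤ dyadicCeil n (tauAbove X x ω) :=
    (hτ0 ω).trans (le_dyadicCeil n _)
  have hlim (ω : Ω) := tendsto_dyadicCeil (tauAbove X x ω)
  have happrox (n : ℕ) := hX.setIntegral_discountedExp_eq_of_countable_range hX0 hα hβ
    (hα.trans_le (le_add_of_nonneg_right (hφ0 β hβ))) (fun t ht => hφ t β ht hβ)
    (isStoppingTime_timeOn_dyadicCeil hτ n) (hTm n) (hT0 n)
    ((countable_range_dyadicCeil n).mono (range_comp_subset_range (tauAbove X x) (dyadicCeil n)))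
  have hlhs : (∫ ω, (if hitsAbove X x ω then Real.exp (-(α * tauAbove X x ω) -
      β * X (tauAbove X x ω) ω) else 0) ∂P) =
      ∫ ω in H, discountedExp α β X (tauAbove X x ω) ω ∂P := by
    rw [← integral_indicator (measurableSet_of_isStoppingTime_timeOn hτ)]
    simp only [indicator_apply, mem_ofPred_eq, discountedExp_of_nonneg (hτ0 _)]
  rw [hlhs, ← hX.setIntegral_integral_discountedExp_Ioi_tauAbove hmono hα hβ x]
  refine tendsto_nhds_unique
    (hX.tendsto_setIntegral_discountedExp hX0 hα.le hβ H hTm hT0 hτ0 hlim) ?_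
  exact ((hX.tendsto_setIntegral_integral_discountedExp_Ioi hX0 hα hβ H hTm hT0 hlim).const_mul
    _).congr fun n => (happrox n).symm

theorem stmt7 [m0 : MeasurableSpace Ω] (P : Measure Ω) (ℱ : Filtration ℝ m0)
    (X : ℝ → Ω → ℝ) (hX : IsLevy P ℱ X)
    (hmono : ∀ ω, MonotoneOn (fun s => X s ω) (Set.Ici 0))
    (φ : ℝ → ℝ) (hφ0 : ∀ l : ℝ, 0 ≤ l → 0 ≤ φ l)
    (hφ : ∀ t l : ℝ, 0 ≤ t → 0 ≤ l →
      (∫ ω, Real.exp (-(l * X t ω)) ∂P) = Real.exp (-(t * φ l)))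
    (α β x : ℝ) (hα : 0 < α) (hβ : 0 ≤ β) (hx : 0 ≤ x) :
    (∫ ω, (if hitsAbove X x ω then
        Real.exp (-(α * tauAbove X x ω) - β * X (tauAbove X x ω) ω) else 0) ∂P) =
      (α + φ β) * ∫ t in Set.Ioi (0 : ℝ), Real.exp (-(α * t)) *
        (∫ ω, (if x < X t ω then Real.exp (-(β * X t ω)) else 0) ∂P) :=
  stmt7_general (m0 := m0) P ℱ X hX hmono φ hφ0 hφ α β x hα hβ

end AKLevy
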